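/- arXiv:1803.02774 — 2 statements merged into one kernel-verified Lean document; each statement's English description precedes it below -/
import Mathlib

section
/- The points of the quadric $Q_u$ (defined by $u(xw-z^2)+(z^2-yt)=0$, with $u\ne 0$, $u\ne1$) fixed by the involution $\iota(x:y:z:t:w)=(w:t:z:y:x)$ are exactly the two points $(1:\pm\sqrt{u}:0:\mp\sqrt{u}:-1)$ together with the conic of points $(b^2-(1-u)(a-b)^2:u(a^2-b^2)-a^2:a^2-u(a-b)^2:u(a^2-b^2)-a^2:b^2-(1-u)(a-b)^2)$ for $(a:b)\in\mathbb{P}^1$. -/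
private def PB (u a b : ℂ) : ℂ := b ^ 2 - (1 - u) * (a - b) ^ 2
private def PA (u a b : ℂ) : ℂ := u * (a ^ 2 - b ^ 2) - a ^ 2
private def PC (u a b : ℂ) : ℂ := a ^ 2 - u * (a - b) ^ 2

private lemma no_base (u a b : ℂ) (hu0 : u ≠ 0) (hu1 : u ≠ 1)
    (hab : ¬(a = 0 ∧ b = 0)) :
    ¬(PB u a b = 0 ∧ PA u a b = 0 ∧ PC u a b = 0) := by
  rintro ⟨hB, hA, hC⟩
  simp only [PB, PA, PC] at hB hA hC
  have hab' : a * b = 0 := by linear_combination (hB + hC) / 2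
  rcases mul_eq_zero.mp hab' with h | h
  · subst h
    have hb2 : u * b ^ 2 = 0 := by linear_combination -hA
    have hb : b = 0 := by
      have := (mul_eq_zero.mp hb2).resolve_left hu0
      exact pow_eq_zero_iff (n := 2) (by norm_num) |>.mp this
    exact hab ⟨rfl, hb⟩
  · subst h
    have ha2 : (u - 1) * a ^ 2 = 0 := by linear_combination hA
    have ha : a = 0 := by
      have := (mul_eq_zero.mp ha2).resolve_left (sub_ne_zero_of_ne hu1)
      exact pow_eq_zero_iff (n := 2) (by norm_num) |>.mp this
    exact hab ⟨ha, rfl⟩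

private lemma conic_param (u : ℂ) (hu0 : u ≠ 0) (hu1 : u ≠ 1) (X Y Z : ℂ)
    (hE : u * X ^ 2 + (1 - u) * Z ^ 2 - Y ^ 2 = 0)
    (hnz : ¬(X = 0 ∧ Y = 0 ∧ Z = 0)) :
    ∃ c : ℂ, c ≠ 0 ∧ ∃ a b : ℂ, ¬(a = 0 ∧ b = 0) ∧
      X = c * PB u a b ∧ Y = c * PA u a b ∧ Z = c * PC u a b := by
  by_cases hsp : X + Y = 0 ∧ Y + Z = 0
  · obtain ⟨hXY, hYZ⟩ := hsp
    have hY : Y ≠ 0 := by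
      rintro rfl
      exact hnz ⟨by linear_combination hXY, rfl, by linear_combination hYZ⟩
    refine ⟨-Y, neg_ne_zero.mpr hY, 1, 1, by norm_num, ?_, ?_, ?_⟩
    · simp only [PB]; linear_combination hXY
    · simp only [PA]; ring
    · simp only [PC]; linear_combination hYZ
  · set a := u * (X + Y) with ha
    set b := (u - 1) * (Y + Z) with hb
    have hab : ¬(a = 0 ∧ b = 0) := by
      rintro ⟨h1, h2⟩
      exact hsp ⟨(mul_eq_zero.mp h1).resolve_left hu0,
        (mul_eq_zero.mp h2).resolve_left (sub_ne_zero_of_ne hu1)⟩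
    have hBA : PB u a b * Y = PA u a b * X := by
      simp only [PB, PA, ha, hb]
      linear_combination (u * (1 - u) * (X + Y)) * hE
    have hCA : PC u a b * Y = PA u a b * Z := by
      simp only [PC, PA, ha, hb]
      linear_combination (u * (1 - u) * (Y + Z)) * hE
    have hBC : PB u a b * Z = PC u a b * X := by
      simp only [PB, PC, ha, hb]
      linear_combination (u * (1 - u) * (Z - X)) * hE
    have hnz' := no_base u a b hu0 hu1 hab
    by_cases hY : Y = 0
    · subst hY
      have hAx : PA u a b * X = 0 := by linear_combination -hBA
      have hAz : PA u a b * Z = 0 := by linear_combination -hCA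
      have hXZ : X ≠ 0 ∨ Z ≠ 0 := by
        by_contra h
        push_neg at h
        exact hnz ⟨h.1, rfl, h.2⟩
      rcases hXZ with hX | hZ
      · have hA0 : PA u a b = 0 := (mul_eq_zero.mp hAx).resolve_right hX
        have hB0 : PB u a b ≠ 0 := by
          intro h
          refine hnz' ⟨h, hA0, ?_⟩
          have : PC u a b * X = 0 := by rw [← hBC, h]; ring
          exact (mul_eq_zero.mp this).resolve_right hX
        refine ⟨X / PB u a b, div_ne_zero hX hB0, a, b, hab, ?_, ?_, ?_⟩
        · field_simp
        · rw [hA0]; ring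
        · rw [div_mul_eq_mul_div, eq_div_iff hB0]
          linear_combination hBC
      · have hA0 : PA u a b = 0 := (mul_eq_zero.mp hAz).resolve_right hZ
        have hC0 : PC u a b ≠ 0 := by
          intro h
          refine hnz' ⟨?_, hA0, h⟩
          have : PB u a b * Z = 0 := by rw [hBC, h]; ring
          exact (mul_eq_zero.mp this).resolve_right hZ
        refine ⟨Z / PC u a b, div_ne_zero hZ hC0, a, b, hab, ?_, ?_, ?_⟩
        · rw [div_mul_eq_mul_div, eq_div_iff hC0]
          linear_combination -hBC
        · rw [hA0]; ring
        · field_simp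
    · have hA0 : PA u a b ≠ 0 := by
        intro h
        refine hnz' ⟨?_, h, ?_⟩
        · have : PB u a b * Y = 0 := by rw [hBA, h]; ring
          exact (mul_eq_zero.mp this).resolve_right hY
        · have : PC u a b * Y = 0 := by rw [hCA, h]; ring
          exact (mul_eq_zero.mp this).resolve_right hY
      refine ⟨Y / PA u a b, div_ne_zero hY hA0, a, b, hab, ?_, ?_, ?_⟩
      · rw [div_mul_eq_mul_div, eq_div_iff hA0]
        linear_combination -hBA
      · field_simp
      · rw [div_mul_eq_mul_div, eq_div_iff hA0]
        linear_combination -hCA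

/-- The `ι`-fixed points of the quadric `Qᵤ` (where `ι(x:y:z:t:w) = (w:t:z:y:x)`)
are exactly the two points `(1 : ±√u : 0 : ∓√u : -1)` together with the conic
parameterized by `(a:b) ∈ ℙ¹`. Points of `ℙ⁴` are represented by nonzero vectors
`v : Fin 5 → ℂ` up to scaling. -/
theorem iota_fixed_points (u s : ℂ) (hu0 : u ≠ 0) (hu1 : u ≠ 1) (hs : s ^ 2 = u) :
    ∀ v : Fin 5 → ℂ, v ≠ 0 →
      ((u * (v 0 * v 4 - v 2 ^ 2) + (v 2 ^ 2 - v 1 * v 3) = 0 ∧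
          ∃ μ : ℂ, μ ≠ 0 ∧ (![v 4, v 3, v 2, v 1, v 0] : Fin 5 → ℂ) = μ • v)
        ↔ ∃ c : ℂ, c ≠ 0 ∧
            (v = c • (![1, s, 0, -s, -1] : Fin 5 → ℂ) ∨
             v = c • (![1, -s, 0, s, -1] : Fin 5 → ℂ) ∨
             ∃ a b : ℂ, ¬(a = 0 ∧ b = 0) ∧
               v = c • (![b ^ 2 - (1 - u) * (a - b) ^ 2,
                          u * (a ^ 2 - b ^ 2) - a ^ 2,
                          a ^ 2 - u * (a - b) ^ 2,
                          u * (a ^ 2 - b ^ 2) - a ^ 2,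
                          b ^ 2 - (1 - u) * (a - b) ^ 2] : Fin 5 → ℂ))) := by
  intro v hv
  constructor
  · rintro ⟨hQ, μ, hμ0, hμ⟩
    have h0 := congrFun hμ 0
    have h1 := congrFun hμ 1
    have h2 := congrFun hμ 2
    have h3 := congrFun hμ 3
    have h4 := congrFun hμ 4
    simp only [Matrix.cons_val_zero, Matrix.cons_val_one, Matrix.head_cons,
      Matrix.cons_val_two, Matrix.tail_cons, Matrix.cons_val_three,
      Matrix.cons_val_four, Pi.smul_apply, smul_eq_mul] at h0 h1 h2 h3 h4
    have hμ2 : μ ^ 2 = 1 := by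
      obtain ⟨i, hi⟩ := Function.ne_iff.mp hv
      simp only [Pi.zero_apply] at hi
      have key : (μ ^ 2 - 1) * v i = 0 := by
        fin_cases i
        · show (μ ^ 2 - 1) * v 0 = 0
          linear_combination (-μ) * h0 - h4
        · show (μ ^ 2 - 1) * v 1 = 0
          linear_combination (-μ) * h1 - h3
        · show (μ ^ 2 - 1) * v 2 = 0
          linear_combination (-(μ + 1)) * h2
        · show (μ ^ 2 - 1) * v 3 = 0
          linear_combination (-μ) * h3 - h1
        · show (μ ^ 2 - 1) * v 4 = 0
          linear_combination (-μ) * h4 - h0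
      have := (mul_eq_zero.mp key).resolve_right hi
      linear_combination this
    have hcases : μ = 1 ∨ μ = -1 := by
      have : (μ - 1) * (μ + 1) = 0 := by linear_combination hμ2
      rcases mul_eq_zero.mp this with h | h
      · exact Or.inl (by linear_combination h)
      · exact Or.inr (by linear_combination h)
    rcases hcases with rfl | rfl
    · -- μ = 1 : conic case
      rw [one_mul] at h0 h1 h2 h3 h4
      have hE : u * (v 0) ^ 2 + (1 - u) * (v 2) ^ 2 - (v 1) ^ 2 = 0 := by
        linear_combination hQ - u * v 0 * h0 + v 1 * h1
      have hnz : ¬(v 0 = 0 ∧ v 1 = 0 ∧ v 2 = 0) := by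
        rintro ⟨e0, e1, e2⟩
        apply hv
        funext i
        fin_cases i <;> simp [e0, e1, e2, h0, h1]
      obtain ⟨c, hc, a, b, hab, hX, hY, hZ⟩ :=
        conic_param u hu0 hu1 (v 0) (v 1) (v 2) hE hnz
      simp only [PB, PA, PC] at hX hY hZ
      refine ⟨c, hc, Or.inr (Or.inr ⟨a, b, hab, ?_⟩)⟩
      have e3 : v 3 = c * (u * (a ^ 2 - b ^ 2) - a ^ 2) := h1.trans hY
      have e4 : v 4 = c * (b ^ 2 - (1 - u) * (a - b) ^ 2) := h0.trans hX
      funext i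
      fin_cases i <;> simp [hX, hY, hZ, e3, e4]
    · -- μ = -1 : isolated points
      have hz : v 2 = 0 := by linear_combination h2 / 2
      rw [h0, h1, hz] at hQ
      have hQ' : v 1 ^ 2 = u * v 0 ^ 2 := by linear_combination hQ
      have hv0 : v 0 ≠ 0 := by
        intro h
        apply hv
        have hv1 : v 1 = 0 := by
          have : v 1 ^ 2 = 0 := by rw [hQ', h]; ring
          exact pow_eq_zero_iff (n := 2) (by norm_num) |>.mp this
        funext i
        fin_cases i <;> simp [h, hv1, hz, h0, h1]
      have hfac : (v 1 - s * v 0) * (v 1 + s * v 0) = 0 := by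
        linear_combination hQ' - v 0 ^ 2 * hs
      rcases mul_eq_zero.mp hfac with h | h
      · refine ⟨v 0, hv0, Or.inl ?_⟩
        have e1 : v 1 = v 0 * s := by linear_combination h
        have e3 : v 3 = -(v 0 * s) := by linear_combination h1 - h
        have e4 : v 4 = -v 0 := by linear_combination h0
        funext i
        fin_cases i <;> simp [hz, e1, e3, e4]
      · refine ⟨v 0, hv0, Or.inr (Or.inl ?_)⟩
        have e1 : v 1 = -(v 0 * s) := by linear_combination h
        have e3 : v 3 = v 0 * s := by linear_combination h1 - h
        have e4 : v 4 = -v 0 := by linear_combination h0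
        funext i
        fin_cases i <;> simp [hz, e1, e3, e4]
  · rintro ⟨c, hc, h | h | ⟨a, b, hab, h⟩⟩ <;> subst h
    · refine ⟨?_, -1, by norm_num, ?_⟩
      · simp only [Pi.smul_apply, smul_eq_mul, Matrix.cons_val_zero,
          Matrix.cons_val_one, Matrix.head_cons, Matrix.cons_val_two,
          Matrix.tail_cons, Matrix.cons_val_three, Matrix.cons_val_four]
        linear_combination c ^ 2 * hs
      · funext i
        fin_cases i <;> simp
    · refine ⟨?_, -1, by norm_num, ?_⟩
      · simp only [Pi.smul_apply, smul_eq_mul, Matrix.cons_val_zero,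
          Matrix.cons_val_one, Matrix.head_cons, Matrix.cons_val_two,
          Matrix.tail_cons, Matrix.cons_val_three, Matrix.cons_val_four]
        linear_combination c ^ 2 * hs
      · funext i
        fin_cases i <;> simp
    · refine ⟨?_, 1, one_ne_zero, ?_⟩
      · simp only [Pi.smul_apply, smul_eq_mul, Matrix.cons_val_zero,
          Matrix.cons_val_one, Matrix.head_cons, Matrix.cons_val_two,
          Matrix.tail_cons, Matrix.cons_val_three, Matrix.cons_val_four]
        ring
      · funext i
        fin_cases i <;> simp
end

section
/- Let $u\in\mathbb{C}$, $u\ne0,1$, and set $q_2=(u-1)a^2-(2u-2)ab+ub^2$ and $q_3=(u-1)a^2+2ab-(u+2)b^2$. Then $q_2$ and $q_3$ have a common linear factor in $\mathbb{C}[a,b]$ if and only if $u^2+u-1=0$, i.e. $u=\frac{-1\pm\sqrt5}{2}$. -/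
/-- For `u ≠ 0, 1`, the binary quadratic forms `q₂ = (u-1)a² - (2u-2)ab + ub²`
and `q₃ = (u-1)a² + 2ab - (u+2)b²` have a common linear factor (equivalently,
a common projective root) if and only if `u² + u - 1 = 0`,
i.e. `u = (-1 ± √5)/2`. -/
theorem q2_q3_common_factor_iff (u : ℂ) (hu0 : u ≠ 0) (hu1 : u ≠ 1) :
    (∃ a b : ℂ, (a ≠ 0 ∨ b ≠ 0) ∧
        (u - 1) * a ^ 2 - (2 * u - 2) * a * b + u * b ^ 2 = 0 ∧
        (u - 1) * a ^ 2 + 2 * a * b - (u + 2) * b ^ 2 = 0)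
      ↔ u ^ 2 + u - 1 = 0 := by
  constructor
  · rintro ⟨a, b, hab, h2, h3⟩
    by_cases hb : b = 0
    · subst hb
      have hu1' : u - 1 ≠ 0 := sub_ne_zero.mpr hu1
      have ha : a = 0 := by
        have h2' : (u - 1) * a ^ 2 = 0 := by linear_combination h2
        rcases mul_eq_zero.mp h2' with h | h
        · exact absurd h hu1'
        · exact pow_eq_zero_iff (n := 2) (by norm_num) |>.mp h
      rcases hab with h | h
      · exact absurd ha h
      · exact absurd rfl h
    · have hd : b * (u * a - (u + 1) * b) = 0 := by linear_combination (1/2 : ℂ) * h3 - (1/2 : ℂ) * h2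
      have ha : u * a - (u + 1) * b = 0 := by
        rcases mul_eq_zero.mp hd with h | h
        · exact absurd h hb
        · exact h
      have key : b ^ 2 * (u ^ 2 + u - 1) = 0 := by
        linear_combination u ^ 2 * h3 + (-(u - 1) * u * a + (-u ^ 2 - 2 * u + 1) * b) * ha
      rcases mul_eq_zero.mp key with h | h
      · exact absurd (pow_eq_zero_iff (n := 2) (by norm_num) |>.mp h) hb
      · exact h
  · intro h
    exact ⟨u + 1, u, Or.inr hu0, by linear_combination h, by linear_combination h⟩
end
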